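/- (Proposition 1(iii)) Fix ε ∈ (0,1) and γ ∈ [1/2,1), and assume the exact posterior content satisfies γ*(x) = γ and that r(C_γ) = r(C_{1−γ}) = r(Ψ). Then among all measurable sets A ⊆ Ψ with Π(A|x) = γ, the γ-relative belief credible region C_γ minimizes δ: for every such A, δ(C_γ) ≤ δ(A). -/

import Mathlib

open MeasureTheory Set

variable {Ω : Type*} [MeasurableSpace Ω]

/-- The posterior probability of a set `A` when the prior is `μ` and the likelihood
(conditional prior predictive density `ψ ↦ m(x|ψ)`) is `f`. -/
noncomputable def postProb (f : Ω → ℝ) (μ : Measure Ω) (A : Set Ω) : ℝ :=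
  (∫ ψ in A, f ψ ∂μ) / (∫ ψ, f ψ ∂μ)

/-- The ε-contaminated prior `(1−ε)P + εQ`. -/
noncomputable def contam (P Q : Measure Ω) (ε : ℝ) : Measure Ω :=
  ENNReal.ofReal (1 - ε) • P + ENNReal.ofReal ε • Q

/-- `r(A) = sup_{ψ ∈ A} f(ψ) / m` (equal to `0` when `A = ∅` since `Real.sSup ∅ = 0`). -/
noncomputable def rSup (f : Ω → ℝ) (P : Measure Ω) (A : Set Ω) : ℝ :=
  sSup (f '' A) / ∫ ψ, f ψ ∂P

/-- The upper posterior probability over all ε-contaminations. -/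
noncomputable def upperPost (f : Ω → ℝ) (P : Measure Ω) (ε : ℝ) (A : Set Ω) : ℝ :=
  ⨆ Q : ProbabilityMeasure Ω, postProb f (contam P (Q : Measure Ω) ε) A


/-- The lower posterior probability over all ε-contaminations. -/
noncomputable def lowerPost (f : Ω → ℝ) (P : Measure Ω) (ε : ℝ) (A : Set Ω) : ℝ :=
  ⨅ Q : ProbabilityMeasure Ω, postProb f (contam P (Q : Measure Ω) ε) A

/-- `δ(A) = Π^{upper}(A|x) − Π^{lower}(A|x)`. -/
noncomputable def deltaPost (f : Ω → ℝ) (P : Measure Ω) (ε : ℝ) (A : Set Ω) : ℝ :=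
  upperPost f P ε A - lowerPost f P ε A

/-- The relative belief ratio `RB(ψ) = f(ψ)/m`. -/
noncomputable def RBr (f : Ω → ℝ) (P : Measure Ω) (ψ : Ω) : ℝ :=
  f ψ / ∫ x, f x ∂P

/-- `c_γ = inf {k ≥ 0 : Π({ψ : RB(ψ) ≤ k}|x) ≥ 1 − γ}`. -/
noncomputable def cGamma (f : Ω → ℝ) (P : Measure Ω) (γ : ℝ) : ℝ :=
  sInf {k : ℝ | 0 ≤ k ∧ 1 - γ ≤ postProb f P {ψ | RBr f P ψ ≤ k}}

/-- The γ-relative belief credible region `C_γ = {ψ : RB(ψ) ≥ c_γ}`. -/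
noncomputable def credRegion (f : Ω → ℝ) (P : Measure Ω) (γ : ℝ) : Set Ω :=
  {ψ | cGamma f P γ ≤ RBr f P ψ}


/-! Contaminating with a Dirac mass at a point of `A` shows that `Π^{upper}(A|x)` is the bound
`1 - (1 - Π(A|x)) / (1 + ε* r(A))` obtained from `∫_A f dQ ≤ sup_A f`, and
`Π^{lower}(A|x) = 1 - Π^{upper}(Aᶜ|x)`. Hence, writing `φ t = 1 / (1 + ε* t)`,
`δ(A) = 1 - (1 - Π(A|x)) φ(r(A)) - Π(A|x) φ(r(Aᶜ))`.
If `Π(A|x) = γ ≥ 1/2`, both `A` and `Aᶜ` have content at least `1 - γ`, so `r(A)` and `r(Aᶜ)`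
are at least `c_γ`, which bounds `r(C_γᶜ)`; and one of them equals `r(Ψ) = r(C_γ)`. Since `φ` is
antitone and `γ ≥ 1 - γ`, this makes `δ(C_γ) ≤ δ(A)`. -/

lemma monotoneOn_add_mul_div_add_mul {N D ε : ℝ} (hε : 0 ≤ ε) (hD : 0 < D) (hND : N ≤ D) :
    MonotoneOn (fun x => (N + ε * x) / (D + ε * x)) (Ici 0) := by
  intro s (hs : 0 ≤ s) t (ht : 0 ≤ t) hst
  rw [div_le_div_iff₀ (by positivity) (by positivity)]
  nlinarith [mul_nonneg hε (mul_nonneg (sub_nonneg.2 hst) (sub_nonneg.2 hND))]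

lemma sSup_image_nonneg {α : Type*} {f : α → ℝ} (hf0 : ∀ x, 0 ≤ f x) (A : Set α) :
    0 ≤ sSup (f '' A) :=
  Real.sSup_nonneg (forall_mem_image.2 fun x _ => hf0 x)

lemma max_sSup_image_sSup_image_compl {α : Type*} {f : α → ℝ} (hf0 : ∀ x, 0 ≤ f x)
    (hbdd : BddAbove (range f)) (A : Set α) :
    max (sSup (f '' A)) (sSup (f '' Aᶜ)) = sSup (range f) := by
  have hle (B : Set α) : sSup (f '' B) ≤ sSup (range f) :=
    Real.sSup_le (forall_mem_image.2 fun x _ => le_csSup hbdd (mem_range_self x))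
      (Real.sSup_nonneg (forall_mem_range.2 hf0))
  refine le_antisymm (max_le (hle A) (hle Aᶜ)) <|
    Real.sSup_le (forall_mem_range.2 fun x => ?_) (le_max_of_le_left (sSup_image_nonneg hf0 A))
  by_cases hx : x ∈ A
  · exact le_max_of_le_left (le_csSup (hbdd.mono (image_subset_range f A)) (mem_image_of_mem f hx))
  · exact le_max_of_le_right
      (le_csSup (hbdd.mono (image_subset_range f Aᶜ)) (mem_image_of_mem f hx))

section Posterior

variable {f : Ω → ℝ} {P Q : Measure Ω} {ε : ℝ} {A : Set Ω}

lemma integrable_of_nonneg_of_le {C : ℝ} (hf : Measurable f) (hf0 : ∀ ψ, 0 ≤ f ψ)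
    (hfC : ∀ ψ, f ψ ≤ C) (μ : Measure Ω) [IsFiniteMeasure μ] : Integrable f μ :=
  .of_bound hf.aestronglyMeasurable C
    (ae_of_all _ fun ψ => by rw [Real.norm_of_nonneg (hf0 ψ)]; exact hfC ψ)

instance [IsFiniteMeasure P] [IsFiniteMeasure Q] : IsFiniteMeasure (contam P Q ε) :=
  ⟨by simp [contam, ENNReal.add_lt_top, ENNReal.mul_lt_top, measure_lt_top]⟩

lemma setIntegral_contam (hfP : Integrable f P) (hfQ : Integrable f Q) (hε0 : 0 ≤ ε) (hε1 : ε ≤ 1)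
    (A : Set Ω) :
    ∫ ψ in A, f ψ ∂contam P Q ε = (1 - ε) * ∫ ψ in A, f ψ ∂P + ε * ∫ ψ in A, f ψ ∂Q := by
  rw [contam, Measure.restrict_add, Measure.restrict_smul, Measure.restrict_smul,
    integral_add_measure (hfP.restrict.smul_measure ENNReal.ofReal_ne_top)
      (hfQ.restrict.smul_measure ENNReal.ofReal_ne_top),
    integral_smul_measure, integral_smul_measure, ENNReal.toReal_ofReal (by linarith),
    ENNReal.toReal_ofReal hε0, smul_eq_mul, smul_eq_mul]

lemma postProb_contam (hfP : Integrable f P) (hfQ : Integrable f Q) (hε0 : 0 ≤ ε) (hε1 : ε ≤ 1)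
    (A : Set Ω) :
    postProb f (contam P Q ε) A =
      ((1 - ε) * ∫ ψ in A, f ψ ∂P + ε * ∫ ψ in A, f ψ ∂Q) /
        ((1 - ε) * ∫ ψ, f ψ ∂P + ε * ∫ ψ, f ψ ∂Q) := by
  rw [postProb, ← setIntegral_univ (μ := contam P Q ε), setIntegral_contam hfP hfQ hε0 hε1,
    setIntegral_contam hfP hfQ hε0 hε1, setIntegral_univ, setIntegral_univ]

lemma postProb_mono {μ : Measure Ω} (hf : Integrable f μ) (hf0 : ∀ ψ, 0 ≤ f ψ) {s t : Set Ω}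
    (hst : s ⊆ t) : postProb f μ s ≤ postProb f μ t :=
  div_le_div_of_nonneg_right (setIntegral_mono_set hf.integrableOn (ae_of_all _ fun ψ => hf0 ψ)
    hst.eventuallyLE) (integral_nonneg hf0)

lemma postProb_compl (hf : Integrable f P) (hm : ∫ ψ, f ψ ∂P ≠ 0) (hA : MeasurableSet A) :
    postProb f P Aᶜ = 1 - postProb f P A := by
  rw [postProb, postProb, setIntegral_compl hA hf, sub_div, div_self hm]

lemma setIntegral_le_sSup_image {C : ℝ} (hf : Measurable f) (hf0 : ∀ ψ, 0 ≤ f ψ)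
    (hfC : ∀ ψ, f ψ ≤ C) (μ : Measure Ω) [IsProbabilityMeasure μ] (hA : MeasurableSet A) :
    ∫ ψ in A, f ψ ∂μ ≤ sSup (f '' A) := by
  have hbdd : BddAbove (f '' A) := ⟨C, forall_mem_image.2 fun ψ _ => hfC ψ⟩
  calc ∫ ψ in A, f ψ ∂μ ≤ ∫ _ in A, sSup (f '' A) ∂μ :=
        setIntegral_mono_on (integrable_of_nonneg_of_le hf hf0 hfC μ).restrict
          (integrable_const _) hA
          fun ψ hψ => le_csSup hbdd (mem_image_of_mem f hψ)
    _ = μ.real A * sSup (f '' A) := by rw [setIntegral_const, smul_eq_mul]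
    _ ≤ sSup (f '' A) := mul_le_of_le_one_left (sSup_image_nonneg hf0 A) measureReal_le_one

end Posterior

section UpperLowerPosterior

variable {f : Ω → ℝ} {C : ℝ} {P : Measure Ω} {ε : ℝ} {A : Set Ω}

lemma integral_contam_pos (hf : Measurable f) (hf0 : ∀ ψ, 0 ≤ f ψ) (hfC : ∀ ψ, f ψ ≤ C)
    [IsFiniteMeasure P] (Q : Measure Ω) [IsFiniteMeasure Q] (hm : 0 < ∫ ψ, f ψ ∂P)
    (hε0 : 0 ≤ ε) (hε1 : ε < 1) : 0 < ∫ ψ, f ψ ∂contam P Q ε := by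
  rw [← setIntegral_univ, setIntegral_contam (integrable_of_nonneg_of_le hf hf0 hfC P)
    (integrable_of_nonneg_of_le hf hf0 hfC Q) hε0 hε1.le, setIntegral_univ, setIntegral_univ]
  have : 0 ≤ ∫ ψ, f ψ ∂Q := integral_nonneg hf0
  have : 0 < 1 - ε := by linarith
  positivity

lemma postProb_contam_le (hf : Measurable f) (hf0 : ∀ ψ, 0 ≤ f ψ) (hfC : ∀ ψ, f ψ ≤ C)
    [IsFiniteMeasure P] (Q : Measure Ω) [IsProbabilityMeasure Q] (hm : 0 < ∫ ψ, f ψ ∂P)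
    (hε0 : 0 ≤ ε) (hε1 : ε < 1) (hA : MeasurableSet A) :
    postProb f (contam P Q ε) A ≤
      ((1 - ε) * ∫ ψ in A, f ψ ∂P + ε * sSup (f '' A)) /
        ((1 - ε) * ∫ ψ, f ψ ∂P + ε * sSup (f '' A)) := by
  have hfP := integrable_of_nonneg_of_le hf hf0 hfC P
  have hfQ := integrable_of_nonneg_of_le hf hf0 hfC Q
  rw [postProb_contam hfP hfQ hε0 hε1.le]
  have hε1' : 0 < 1 - ε := by linarith
  have hI0 : 0 ≤ ∫ ψ in A, f ψ ∂P := setIntegral_nonneg hA fun ψ _ => hf0 ψ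
  have hIm : ∫ ψ in A, f ψ ∂P ≤ ∫ ψ, f ψ ∂P := setIntegral_le_integral hfP (ae_of_all _ hf0)
  have ha0 : 0 ≤ ∫ ψ in A, f ψ ∂Q := setIntegral_nonneg hA fun ψ _ => hf0 ψ
  have hat : ∫ ψ in A, f ψ ∂Q ≤ ∫ ψ, f ψ ∂Q := setIntegral_le_integral hfQ (ae_of_all _ hf0)
  calc _ ≤ ((1 - ε) * ∫ ψ in A, f ψ ∂P + ε * ∫ ψ in A, f ψ ∂Q) /
        ((1 - ε) * ∫ ψ, f ψ ∂P + ε * ∫ ψ in A, f ψ ∂Q) := by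
          gcongr
    _ ≤ _ := monotoneOn_add_mul_div_add_mul hε0 (by positivity) (by gcongr) ha0
          (sSup_image_nonneg hf0 A) (setIntegral_le_sSup_image hf hf0 hfC Q hA)

lemma postProb_contam_dirac (hf : Measurable f) (hf0 : ∀ ψ, 0 ≤ f ψ) (hfC : ∀ ψ, f ψ ≤ C)
    [IsFiniteMeasure P] (hε0 : 0 ≤ ε) (hε1 : ε ≤ 1) (hA : MeasurableSet A) {ψ : Ω} (hψ : ψ ∈ A) :
    postProb f (contam P (Measure.dirac ψ) ε) A =
      ((1 - ε) * ∫ ψ in A, f ψ ∂P + ε * f ψ) / ((1 - ε) * ∫ ψ, f ψ ∂P + ε * f ψ) := by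
  classical
  rw [postProb_contam (integrable_of_nonneg_of_le hf hf0 hfC P)
    (integrable_of_nonneg_of_le hf hf0 hfC _) hε0 hε1,
    integral_dirac' f ψ hf.stronglyMeasurable, setIntegral_dirac' hf.stronglyMeasurable ψ hA,
    if_pos hψ]

theorem upperPost_eq_sSup_image (hf : Measurable f) (hf0 : ∀ ψ, 0 ≤ f ψ) (hfC : ∀ ψ, f ψ ≤ C)
    [IsProbabilityMeasure P] (hm : 0 < ∫ ψ, f ψ ∂P) (hε0 : 0 ≤ ε) (hε1 : ε < 1)
    (hA : MeasurableSet A) :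
    upperPost f P ε A =
      ((1 - ε) * ∫ ψ in A, f ψ ∂P + ε * sSup (f '' A)) /
        ((1 - ε) * ∫ ψ, f ψ ∂P + ε * sSup (f '' A)) := by
  have : Nonempty (ProbabilityMeasure Ω) := ⟨⟨P, inferInstance⟩⟩
  have hle (Q : ProbabilityMeasure Ω) := postProb_contam_le hf hf0 hfC Q hm hε0 hε1 hA
  rw [upperPost]
  refine le_antisymm (ciSup_le hle) ?_
  rcases A.eq_empty_or_nonempty with rfl | hAne
  · simp [postProb]
  have hbdd : BddAbove (range fun Q : ProbabilityMeasure Ω => postProb f (contam P Q ε) A) :=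
    ⟨_, forall_mem_range.2 hle⟩
  have hε1' : 0 < 1 - ε := by linarith
  have hS0 := sSup_image_nonneg hf0 A
  set N := (1 - ε) * ∫ ψ in A, f ψ ∂P
  set D := (1 - ε) * ∫ ψ, f ψ ∂P
  have hD : 0 < D := by positivity
  have hmono : MonotoneOn (fun x => (N + ε * x) / (D + ε * x)) (f '' A) :=
    (monotoneOn_add_mul_div_add_mul hε0 hD (mul_le_mul_of_nonneg_left
      (setIntegral_le_integral (integrable_of_nonneg_of_le hf hf0 hfC P) (ae_of_all _ hf0))
      hε1'.le)).mono (image_subset_iff.2 fun ψ _ => hf0 ψ)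
  have hcont : ContinuousWithinAt (fun x => (N + ε * x) / (D + ε * x)) (f '' A) (sSup (f '' A)) :=
    ContinuousAt.continuousWithinAt (by fun_prop (disch := positivity))
  refine (hmono.map_csSup_of_continuousWithinAt hcont (hAne.image f)
    ⟨C, forall_mem_image.2 fun ψ _ => hfC ψ⟩).trans_le ?_
  refine csSup_le ((hAne.image f).image _) ?_
  rintro _ ⟨_, ⟨ψ, hψ, rfl⟩, rfl⟩
  exact (postProb_contam_dirac hf hf0 hfC hε0 hε1.le hA hψ).symm.trans_le
    (le_ciSup hbdd ⟨Measure.dirac ψ, inferInstance⟩)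

theorem lowerPost_eq_one_sub_upperPost_compl (hf : Measurable f) (hf0 : ∀ ψ, 0 ≤ f ψ)
    (hfC : ∀ ψ, f ψ ≤ C) [IsProbabilityMeasure P] (hm : 0 < ∫ ψ, f ψ ∂P) (hε0 : 0 ≤ ε)
    (hε1 : ε < 1) (hA : MeasurableSet A) :
    lowerPost f P ε A = 1 - upperPost f P ε Aᶜ := by
  have : Nonempty (ProbabilityMeasure Ω) := ⟨⟨P, inferInstance⟩⟩
  have hbdd : BddAbove (range fun Q : ProbabilityMeasure Ω => postProb f (contam P Q ε) Aᶜ) :=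
    ⟨_, forall_mem_range.2 fun Q => postProb_contam_le hf hf0 hfC Q hm hε0 hε1 hA.compl⟩
  rw [upperPost, Antitone.map_ciSup_of_continuousAt (continuous_sub_left 1).continuousAt
    (fun _ _ h => sub_le_sub_left h 1) hbdd, lowerPost]
  refine iInf_congr fun Q => ?_
  rw [postProb_compl (integrable_of_nonneg_of_le hf hf0 hfC _)
    (integral_contam_pos hf hf0 hfC Q hm hε0 hε1).ne' hA, sub_sub_cancel]

theorem upperPost_eq (hf : Measurable f) (hf0 : ∀ ψ, 0 ≤ f ψ) (hfC : ∀ ψ, f ψ ≤ C)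
    [IsProbabilityMeasure P] (hm : 0 < ∫ ψ, f ψ ∂P) (hε0 : 0 ≤ ε) (hε1 : ε < 1)
    (hA : MeasurableSet A) :
    upperPost f P ε A = 1 - (1 - postProb f P A) / (1 + ε / (1 - ε) * rSup f P A) := by
  have hε1' : 0 < 1 - ε := by linarith
  have hS := sSup_image_nonneg hf0 A
  rw [upperPost_eq_sSup_image hf hf0 hfC hm hε0 hε1 hA, postProb, rSup]
  field_simp
  ring

theorem deltaPost_eq (hf : Measurable f) (hf0 : ∀ ψ, 0 ≤ f ψ) (hfC : ∀ ψ, f ψ ≤ C)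
    [IsProbabilityMeasure P] (hm : 0 < ∫ ψ, f ψ ∂P) (hε0 : 0 ≤ ε) (hε1 : ε < 1)
    (hA : MeasurableSet A) :
    deltaPost f P ε A = 1 - (1 - postProb f P A) / (1 + ε / (1 - ε) * rSup f P A)
      - postProb f P A / (1 + ε / (1 - ε) * rSup f P Aᶜ) := by
  rw [deltaPost, lowerPost_eq_one_sub_upperPost_compl hf hf0 hfC hm hε0 hε1 hA,
    upperPost_eq hf hf0 hfC hm hε0 hε1 hA, upperPost_eq hf hf0 hfC hm hε0 hε1 hA.compl,
    postProb_compl (integrable_of_nonneg_of_le hf hf0 hfC P) hm.ne' hA]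
  ring

end UpperLowerPosterior

section RelativeBelief

variable {f : Ω → ℝ} {C : ℝ} {P : Measure Ω} {γ : ℝ}

lemma rSup_nonneg (hf0 : ∀ ψ, 0 ≤ f ψ) (A : Set Ω) : 0 ≤ rSup f P A :=
  div_nonneg (sSup_image_nonneg hf0 A) (integral_nonneg hf0)

lemma max_rSup_rSup_compl (hf0 : ∀ ψ, 0 ≤ f ψ) (hbdd : BddAbove (range f)) (A : Set Ω) :
    max (rSup f P A) (rSup f P Aᶜ) = rSup f P univ := by
  rw [rSup, rSup, rSup, max_div_div_right (integral_nonneg hf0), image_univ,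
    max_sSup_image_sSup_image_compl hf0 hbdd]

lemma measurableSet_credRegion (hf : Measurable f) (P : Measure Ω) (γ : ℝ) :
    MeasurableSet (credRegion f P γ) :=
  measurableSet_le measurable_const (hf.div_const _)

lemma cGamma_le_rSup (hf : Measurable f) (hf0 : ∀ ψ, 0 ≤ f ψ) (hfC : ∀ ψ, f ψ ≤ C)
    [IsFiniteMeasure P] (hm : 0 < ∫ ψ, f ψ ∂P) {B : Set Ω} (hB : 1 - γ ≤ postProb f P B) :
    cGamma f P γ ≤ rSup f P B := by
  have hsub : B ⊆ {ψ | RBr f P ψ ≤ rSup f P B} := fun ψ hψ =>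
    div_le_div_of_nonneg_right (le_csSup ⟨C, forall_mem_image.2 fun ψ _ => hfC ψ⟩
      (mem_image_of_mem f hψ)) hm.le
  exact csInf_le ⟨0, fun k hk => hk.1⟩
    ⟨rSup_nonneg hf0 B, hB.trans (postProb_mono (integrable_of_nonneg_of_le hf hf0 hfC P) hf0 hsub)⟩

lemma rSup_compl_credRegion_le (hm : 0 < ∫ ψ, f ψ ∂P) {r : ℝ} (hr : 0 ≤ r)
    (hcr : cGamma f P γ ≤ r) : rSup f P (credRegion f P γ)ᶜ ≤ r := by
  rw [rSup, div_le_iff₀ hm]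
  refine Real.sSup_le (forall_mem_image.2 fun ψ hψ => ?_) (by positivity)
  have hψc : f ψ / ∫ x, f x ∂P < cGamma f P γ := not_le.1 hψ
  rw [div_lt_iff₀ hm] at hψc
  nlinarith

end RelativeBelief

/-- With `φ t = 1 / (1 + k t)`, antitone on `[0, ∞)`, the right side minus the left side is
`p (φ w - φ u) + (2p - 1) (φ u - φ v)` when `v = max u v`. -/
lemma one_sub_div_add_div_le {k p u v w : ℝ} (hk : 0 ≤ k) (hp : 1 / 2 ≤ p) (hw : 0 ≤ w)
    (hwu : w ≤ u) (hwv : w ≤ v) :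
    (1 - p) / (1 + k * u) + p / (1 + k * v) ≤ (1 - p) / (1 + k * max u v) + p / (1 + k * w) := by
  have hφ {s t : ℝ} (hs : 0 ≤ s) (hst : s ≤ t) : 1 / (1 + k * t) ≤ 1 / (1 + k * s) :=
    one_div_le_one_div_of_le (by positivity) (by gcongr)
  simp only [div_eq_mul_one_div (1 - p), div_eq_mul_one_div p]
  rcases le_total u v with huv | hvu
  · rw [max_eq_right huv]
    nlinarith [mul_le_mul_of_nonneg_left (hφ hw hwu) (by linarith : (0 : ℝ) ≤ p),
      mul_le_mul_of_nonneg_left (hφ (hw.trans hwu) huv) (by linarith : (0 : ℝ) ≤ 2 * p - 1)]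
  · rw [max_eq_left hvu]
    nlinarith [mul_le_mul_of_nonneg_left (hφ hw hwv) (by linarith : (0 : ℝ) ≤ p)]

theorem credRegion_min_delta_exact_content_general
    (f : Ω → ℝ) (hf : Measurable f) (hf0 : ∀ ψ, 0 ≤ f ψ)
    (C : ℝ) (hfC : ∀ ψ, f ψ ≤ C)
    (P : Measure Ω) [IsProbabilityMeasure P]
    (hm : 0 < ∫ ψ, f ψ ∂P)
    (ε : ℝ) (hε : ε ∈ Set.Ioo (0 : ℝ) 1)
    (γ : ℝ) (hγ : γ ∈ Set.Ico (1 / 2 : ℝ) 1)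
    (hexact : postProb f P (credRegion f P γ) = γ)
    (hC1 : rSup f P (credRegion f P γ) = rSup f P Set.univ)
    (A : Set Ω) (hA : MeasurableSet A)
    (hA1 : postProb f P A = γ) :
    deltaPost f P ε (credRegion f P γ) ≤ deltaPost f P ε A := by
  obtain ⟨hε0, hε1⟩ := hε
  have hcA : cGamma f P γ ≤ rSup f P A :=
    cGamma_le_rSup hf hf0 hfC hm (by rw [hA1]; linarith [hγ.1])
  have hcAc : cGamma f P γ ≤ rSup f P Aᶜ := cGamma_le_rSup hf hf0 hfC hm
    (by rw [postProb_compl (integrable_of_nonneg_of_le hf hf0 hfC P) hm.ne' hA, hA1])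
  rw [deltaPost_eq hf hf0 hfC hm hε0.le hε1 (measurableSet_credRegion hf P γ),
    deltaPost_eq hf hf0 hfC hm hε0.le hε1 hA, hexact, hA1, hC1,
    ← max_rSup_rSup_compl hf0 ⟨C, forall_mem_range.2 hfC⟩ A]
  have hw0 := rSup_nonneg (P := P) hf0 (credRegion f P γ)ᶜ
  linarith [one_sub_div_add_div_le (div_nonneg hε0.le (by linarith : (0 : ℝ) ≤ 1 - ε)) hγ.1 hw0
    (rSup_compl_credRegion_le hm (rSup_nonneg hf0 A) hcA)
    (rSup_compl_credRegion_le hm (rSup_nonneg hf0 Aᶜ) hcAc)]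

/-- Proposition 1 (iii): if `γ*(x) = γ ≥ 1/2`, then among all measurable sets `A` with
`Π(A|x) = γ`, the γ-relative belief credible region `C_γ` minimizes `δ`. -/
theorem credRegion_min_delta_exact_content
    (f : Ω → ℝ) (hf : Measurable f) (hf0 : ∀ ψ, 0 ≤ f ψ)
    (C : ℝ) (hfC : ∀ ψ, f ψ ≤ C)
    (P : Measure Ω) [IsProbabilityMeasure P]
    (hm : 0 < ∫ ψ, f ψ ∂P)
    (ε : ℝ) (hε : ε ∈ Set.Ioo (0 : ℝ) 1)
    (γ : ℝ) (hγ : γ ∈ Set.Ico (1 / 2 : ℝ) 1)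
    (hexact : postProb f P (credRegion f P γ) = γ)
    (hC1 : rSup f P (credRegion f P γ) = rSup f P Set.univ)
    (hC2 : rSup f P (credRegion f P (1 - γ)) = rSup f P Set.univ)
    (A : Set Ω) (hA : MeasurableSet A)
    (hA1 : postProb f P A = γ) :
    deltaPost f P ε (credRegion f P γ) ≤ deltaPost f P ε A :=
  credRegion_min_delta_exact_content_general f hf hf0 C hfC P hm ε hε γ hγ hexact hC1 A hA hA1
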